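/- Let $H$ be a connected graph on $[t]$ and $H_1, \ldots, H_r$ connected graphs on disjoint vertex sets $[n_1], \ldots, [n_r]$ with $r \geq 2$, and let $G = H * (\bigsqcup_{i=1}^r H_i)$. Then $c_G(T) = |T| + 1$ for all $T \in \mathcal{C}(G)$ if and only if $H$ is complete, $r = t + 1$, and $c_{H_i}(T_i) = |T_i| + 1$ for all $T_i \in \mathcal{C}(H_i)$, $i = 1, \ldots, r$. -/

import Mathlib

/-
In a join every vertex of one side is adjacent to every vertex of the other, so deleting `T`
leaves a connected graph unless `Tᶜ` lies on one side. Hence a nonempty `T ∈ 𝒞(H * ⊔ Hᵢ)`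
contains a whole side: either `T = V(⊔ Hᵢ) ∪ A` with `A ∈ 𝒞(H)` and `H - A` disconnected, and
then `c_G(T) = c_H(A)`; or `T = V(H) ∪ ⋃ Tᵢ` with `Tᵢ ∈ 𝒞(Hᵢ)`, and then
`c_G(T) = ∑ c_{Hᵢ}(Tᵢ) ≥ r ≥ 2`. Taking all `Tᵢ = ∅` forces `r = t + 1`, and a single nonempty
`Tⱼ` gives the condition for `Hⱼ`; conversely these two conditions make the counts add up.
For `T` of the first kind `c_H(A) ≤ t - |A| < |V(⊔ Hᵢ)| + |A| + 1`, so no such `A` may exist;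
but if `H` is not complete, a minimal set disconnecting `H` is one, since each of its vertices
is a cut point.
-/

open SimpleGraph Set

/-- Number of connected components of the induced subgraph of `G` on `s`. -/
noncomputable def nc {V : Type*} (G : SimpleGraph V) (s : Set V) : ℕ :=
  Nat.card (G.induce s).ConnectedComponent

/-- `T` has the cut point property for `G`: every `i ∈ T` is a cut point of the
induced subgraph on `Tᶜ ∪ {i}` (removing `i` increases the number of components). -/
def CutPointProperty {V : Type*} (G : SimpleGraph V) (T : Set V) : Prop :=
  ∀ i ∈ T, nc G (Tᶜ ∪ {i}) < nc G Tᶜ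

/-- The join `G₁ * G₂` of two graphs on disjoint vertex sets. -/
def joinGraph {V₁ V₂ : Type*} (G₁ : SimpleGraph V₁) (G₂ : SimpleGraph V₂) :
    SimpleGraph (V₁ ⊕ V₂) where
  Adj v w :=
    match v, w with
    | Sum.inl a, Sum.inl b => G₁.Adj a b
    | Sum.inr a, Sum.inr b => G₂.Adj a b
    | Sum.inl _, Sum.inr _ => True
    | Sum.inr _, Sum.inl _ => True
  symm := by constructor; rintro (a | a) (b | b) h <;> simp_all <;> exact h.symm
  loopless := by constructor; rintro (a | a) h <;> simp_all

/-- Disjoint union of an indexed family of graphs. -/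
def sigmaGraph {ι : Type*} {V : ι → Type*} (G : ∀ i, SimpleGraph (V i)) :
    SimpleGraph (Σ i, V i) where
  Adj v w := ∃ h : v.1 = w.1, (G w.1).Adj (h ▸ v.2) w.2
  symm := by
    constructor
    rintro ⟨i, a⟩ ⟨j, b⟩ ⟨h, hab⟩
    dsimp at h hab ⊢
    subst h
    exact ⟨rfl, hab.symm⟩
  loopless := by
    constructor
    rintro ⟨i, a⟩ ⟨h, hab⟩
    dsimp at h hab
    exact (G i).irrefl hab
/-- The corona `H ⊙ H'`: one copy of `H'` for each vertex `v` of `H`,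
with every vertex of the copy joined to `v`. -/
def coronaGraph {V₁ V₂ : Type*} (H : SimpleGraph V₁) (H' : SimpleGraph V₂) :
    SimpleGraph (V₁ ⊕ V₁ × V₂) where
  Adj v w :=
    match v, w with
    | Sum.inl a, Sum.inl b => H.Adj a b
    | Sum.inl a, Sum.inr p => a = p.1
    | Sum.inr p, Sum.inl b => p.1 = b
    | Sum.inr p, Sum.inr q => p.1 = q.1 ∧ H'.Adj p.2 q.2
  symm := by
    constructor
    rintro (a | p) (b | q) h <;> dsimp at h ⊢
    · exact h.symm
    · exact h.symm
    · exact h.symm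
    · exact ⟨h.1.symm, h.2.symm⟩
  loopless := by constructor; rintro (a | p) h <;> simp_all

/-- The whisker graph `W(H)`: a pendant vertex attached to each vertex of `H`. -/
def whiskerGraph {V : Type*} (H : SimpleGraph V) : SimpleGraph (V ⊕ V) where
  Adj v w :=
    match v, w with
    | Sum.inl a, Sum.inl b => H.Adj a b
    | Sum.inl a, Sum.inr b => a = b
    | Sum.inr a, Sum.inl b => a = b
    | Sum.inr _, Sum.inr _ => False
  symm := by constructor; rintro (a | a) (b | b) h <;> simp_all; exact h.symm
  loopless := by constructor; rintro (a | a) h <;> simp_all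

/-- `F` is (the vertex set of) a maximal clique of `G`. -/
def MaxClique {V : Type*} (G : SimpleGraph V) (F : Set V) : Prop :=
  Maximal G.IsClique F

/-- A graph is chordal if every cycle of length at least 4 has a chord. -/
def IsChordal {V : Type*} (G : SimpleGraph V) : Prop :=
  ∀ (n : ℕ), 4 ≤ n → ∀ c : ℕ → V, Set.InjOn c (Set.Iio n) →
    (∀ i < n, G.Adj (c i) (c ((i + 1) % n))) →
    ∃ i < n, ∃ j < n, j ≠ i ∧ j ≠ (i + 1) % n ∧ i ≠ (j + 1) % n ∧ G.Adj (c i) (c j)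

/-- A generalized block graph: a connected chordal graph in which any three distinct
maximal cliques with nonempty common intersection have all pairwise intersections equal. -/
def GenBlockGraph {V : Type*} (G : SimpleGraph V) : Prop :=
  G.Connected ∧ IsChordal G ∧
    ∀ F₁ F₂ F₃ : Set V, MaxClique G F₁ → MaxClique G F₂ → MaxClique G F₃ →
      F₁ ≠ F₂ → F₁ ≠ F₃ → F₂ ≠ F₃ → (F₁ ∩ F₂ ∩ F₃).Nonempty →
      F₁ ∩ F₂ = F₁ ∩ F₃ ∧ F₁ ∩ F₂ = F₂ ∩ F₃

/-- `A` is a cut set of `G`: deleting `A` increases the number of connected components. -/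
def IsCutSet {V : Type*} (G : SimpleGraph V) (A : Set V) : Prop :=
  nc G Set.univ < nc G Aᶜ

/-- `A` is an inclusion-minimal cut set of `G`. -/
def IsMinCutSet {V : Type*} (G : SimpleGraph V) (A : Set V) : Prop :=
  IsCutSet G A ∧ ∀ B ⊂ A, ¬ IsCutSet G B

/-- `A` is a `t`-minimal cut set of `G`: a minimal cut set which is the common
intersection of exactly `t` maximal cliques of `G` and disjoint from all other
maximal cliques. -/
def IsTMinCut {V : Type*} (G : SimpleGraph V) (t : ℕ) (A : Set V) : Prop :=
  IsMinCutSet G A ∧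
  {F : Set V | MaxClique G F ∧ A ⊆ F}.ncard = t ∧
  ⋂₀ {F : Set V | MaxClique G F ∧ A ⊆ F} = A ∧
  ∀ F : Set V, MaxClique G F → ¬ A ⊆ F → F ∩ A = ∅

/-- `B` is a branch of the facet `F` in the clique complex of `G`. -/
def IsBranch {V : Type*} (G : SimpleGraph V) (F B : Set V) : Prop :=
  MaxClique G B ∧ B ≠ F ∧ ∀ H : Set V, MaxClique G H → H ≠ F → H ∩ F ⊆ B ∩ F

/-- `F` is a leaf of the clique complex of `G`. -/
def IsLeafClique {V : Type*} (G : SimpleGraph V) (F : Set V) : Prop :=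
  MaxClique G F ∧ ((∀ F' : Set V, MaxClique G F' → F' = F) ∨ ∃ B, IsBranch G F B)

lemma Fintype.sum_lt_sum_iff_of_eq_of_ne {ι M : Type*} [Fintype ι] [DecidableEq ι]
    [AddCommMonoid M] [PartialOrder M] [IsOrderedCancelAddMonoid M] {f g : ι → M} (j : ι)
    (h : ∀ i ≠ j, f i = g i) : ∑ i, f i < ∑ i, g i ↔ f j < g j := by
  rw [Fintype.sum_eq_add_sum_compl j f, Fintype.sum_eq_add_sum_compl j g,
    Finset.sum_congr rfl fun i hi => h i (by simpa using hi)]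
  exact add_lt_add_iff_right _

lemma SimpleGraph.Walk.apply_eq_apply_of_adj {V β : Type*} {G : SimpleGraph V} {f : V → β}
    (hf : ∀ ⦃v w⦄, G.Adj v w → f v = f w) {u v : V} (p : G.Walk u v) : f u = f v := by
  induction p with
  | nil => rfl
  | cons h _ ih => exact (hf h).trans ih

def IsCutUnmixed {V : Type*} (G : SimpleGraph V) : Prop :=
  ∀ T : Set V, CutPointProperty G T → nc G Tᶜ = T.ncard + 1

section ComponentCount

variable {V W : Type*} {G : SimpleGraph V} {G' : SimpleGraph W}

lemma nc_eq_one_of_connected {s : Set V} (h : (G.induce s).Connected) : nc G s = 1 := by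
  have := h.preconnected.subsingleton_connectedComponent
  have := h.nonempty.map (G.induce s).connectedComponentMk
  exact Nat.card_unique

lemma nc_univ_of_connected (h : G.Connected) : nc G univ = 1 :=
  nc_eq_one_of_connected ((induceUnivIso G).connected_iff.mpr h)

lemma nc_singleton (G : SimpleGraph V) (v : V) : nc G {v} = 1 :=
  nc_eq_one_of_connected (by rw [induce_singleton_eq_top]; exact connected_top)

lemma nc_empty (G : SimpleGraph V) : nc G ∅ = 0 := by
  have : IsEmpty (G.induce (∅ : Set V)).ConnectedComponent :=
    ⟨ConnectedComponent.ind fun v => v.2⟩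
  exact Nat.card_of_isEmpty

lemma nc_top_le_one (s : Set V) : nc (⊤ : SimpleGraph V) s ≤ 1 := by
  have := (preconnected_top (V := s)).subsingleton_connectedComponent
  rw [nc, induce_top]
  exact Finite.card_le_one_iff_subsingleton.mpr this

lemma nc_image_embedding (f : G ↪g G') (s : Set V) : nc G' (f '' s) = nc G s := by
  have e := (f.comp (Embedding.induce s)).isoInduceRange
  rw [nc, nc, Nat.card_congr e.connectedComponentEquiv]
  congr! <;> ext <;> simp

variable [Finite V]

lemma nc_pos {s : Set V} (hs : s.Nonempty) : 0 < nc G s :=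
  have := hs.to_subtype.map (G.induce s).connectedComponentMk
  Nat.card_pos

lemma nc_le_ncard (G : SimpleGraph V) (s : Set V) : nc G s ≤ s.ncard :=
  Nat.card_coe_set_eq s ▸ Nat.card_le_card_of_surjective _ Quot.mk_surjective

end ComponentCount

section CutPointProperty

variable {V W : Type*} {G : SimpleGraph V} {G' : SimpleGraph W}

lemma cutPointProperty_empty (G : SimpleGraph V) : CutPointProperty G ∅ := fun _ h => h.elim

lemma CutPointProperty.compl_nonempty [Nonempty V] {T : Set V} (h : CutPointProperty G T) :
    Tᶜ.Nonempty := by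
  rw [nonempty_iff_ne_empty]
  intro hT
  obtain ⟨v⟩ := ‹Nonempty V›
  have := h v (compl_empty_iff.mp hT ▸ mem_univ v)
  rw [hT, nc_empty] at this
  exact Nat.not_lt_zero _ this

lemma cutPointProperty_image_iso (e : G ≃g G') (T : Set V) :
    CutPointProperty G' (e '' T) ↔ CutPointProperty G T := by
  have hc : (e '' T)ᶜ = e '' Tᶜ := (image_compl_eq e.bijective).symm
  simp only [CutPointProperty, forall_mem_image, hc, ← image_singleton, ← image_union]
  exact forall₂_congr fun _ _ => iff_of_eq <| congrArg₂ (· < ·)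
    (nc_image_embedding e.toEmbedding _) (nc_image_embedding e.toEmbedding _)

lemma one_lt_nc_pair [Finite V] {a b : V} (hab : a ≠ b) (h : ¬G.Adj a b) :
    1 < nc G {a, b} := by
  have h' : ¬G.Adj b a := fun h' => h h'.symm
  have hbot : G.induce {a, b} = ⊥ := by
    ext ⟨x, hx⟩ ⟨y, hy⟩
    rcases hx with rfl | rfl <;> rcases hy with rfl | rfl <;> simp [h, h']
  rw [nc, hbot, Finite.one_lt_card_iff_nontrivial]
  refine ⟨⟨connectedComponentMk _ ⟨a, by simp⟩, connectedComponentMk _ ⟨b, by simp⟩,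
    fun he => hab ?_⟩⟩
  exact congrArg Subtype.val (reachable_bot.mp (ConnectedComponent.exact he))

lemma exists_cutPointProperty_one_lt_nc [Finite V] (hG : G ≠ ⊤) :
    ∃ A, CutPointProperty G A ∧ 1 < nc G Aᶜ := by
  obtain ⟨a, b, hab, hnadj⟩ : ∃ a b, a ≠ b ∧ ¬G.Adj a b := by
    by_contra! h
    exact hG (eq_top_iff.mpr fun a b hab => h a b hab)
  obtain ⟨A, -, hAmin⟩ := exists_minimal_le_of_wellFoundedLT (fun A => 1 < nc G Aᶜ)
    {a, b}ᶜ (by rw [compl_compl]; exact one_lt_nc_pair hab hnadj)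
  refine ⟨A, fun x hx => ?_, hAmin.prop⟩
  have hdrop : ¬1 < nc G (A \ {x})ᶜ :=
    fun h => (sdiff_singleton_ssubset.mpr hx).not_ge (hAmin.le_of_le h sdiff_subset)
  rw [compl_sdiff, union_comm] at hdrop
  exact (not_lt.mp hdrop).trans_lt hAmin.prop

lemma forall_nc_compl_eq_iff_eq_top [Finite V] {m : ℕ} (hm : Nat.card V ≤ m) :
    (∀ A, CutPointProperty G A → 1 < nc G Aᶜ → nc G Aᶜ = A.ncard + m + 1) ↔ G = ⊤ := by
  refine ⟨fun h => by_contra fun hG => ?_, ?_⟩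
  · obtain ⟨A, hA, hsep⟩ := exists_cutPointProperty_one_lt_nc hG
    have := h A hA hsep
    have := nc_le_ncard G Aᶜ
    have := ncard_le_card Aᶜ
    omega
  · rintro rfl A - hsep
    exact absurd (nc_top_le_one _) hsep.not_ge

end CutPointProperty

section Join

variable {V₁ V₂ : Type*} {G₁ : SimpleGraph V₁} {G₂ : SimpleGraph V₂}

def SimpleGraph.Embedding.joinInl (G₁ : SimpleGraph V₁) (G₂ : SimpleGraph V₂) :
    G₁ ↪g joinGraph G₁ G₂ where
  toFun := Sum.inl
  inj' := Sum.inl_injective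
  map_rel_iff' := Iff.rfl

def SimpleGraph.Embedding.joinInr (G₁ : SimpleGraph V₁) (G₂ : SimpleGraph V₂) :
    G₂ ↪g joinGraph G₁ G₂ where
  toFun := Sum.inr
  inj' := Sum.inr_injective
  map_rel_iff' := Iff.rfl

def SimpleGraph.Iso.joinComm (G₁ : SimpleGraph V₁) (G₂ : SimpleGraph V₂) :
    joinGraph G₁ G₂ ≃g joinGraph G₂ G₁ where
  toEquiv := Equiv.sumComm V₁ V₂
  map_rel_iff' := by rintro (a | a) (b | b) <;> exact Iff.rfl

lemma joinGraph_induce_connected {s : Set (V₁ ⊕ V₂)}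
    (h₁ : ∃ a, Sum.inl a ∈ s) (h₂ : ∃ b, Sum.inr b ∈ s) :
    ((joinGraph G₁ G₂).induce s).Connected := by
  obtain ⟨a, ha⟩ := h₁
  obtain ⟨b, hb⟩ := h₂
  set G := (joinGraph G₁ G₂).induce s
  have to_a : ∀ v : s, G.Reachable v ⟨_, ha⟩ := by
    rintro ⟨c | c, hc⟩
    · exact (Adj.reachable (G := G) (u := ⟨_, hc⟩) (v := ⟨_, hb⟩) trivial).trans
        (Adj.reachable (G := G) (v := ⟨_, ha⟩) trivial)
    · exact Adj.reachable (G := G) (u := ⟨_, hc⟩) (v := ⟨_, ha⟩) trivial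
  exact (connected_iff_exists_forall_reachable G).mpr ⟨⟨_, ha⟩, fun v => (to_a v).symm⟩

lemma nc_joinGraph_eq_one {s : Set (V₁ ⊕ V₂)}
    (h₁ : ∃ a, Sum.inl a ∈ s) (h₂ : ∃ b, Sum.inr b ∈ s) : nc (joinGraph G₁ G₂) s = 1 :=
  nc_eq_one_of_connected (joinGraph_induce_connected h₁ h₂)

lemma nc_joinGraph_image_inl (s : Set V₁) : nc (joinGraph G₁ G₂) (Sum.inl '' s) = nc G₁ s :=
  nc_image_embedding (Embedding.joinInl G₁ G₂) s

lemma nc_joinGraph_image_inr (s : Set V₂) : nc (joinGraph G₁ G₂) (Sum.inr '' s) = nc G₂ s :=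
  nc_image_embedding (Embedding.joinInr G₁ G₂) s

lemma compl_range_inr_union_image_inl (A : Set V₁) :
    (range Sum.inr ∪ Sum.inl '' A : Set (V₁ ⊕ V₂))ᶜ = Sum.inl '' Aᶜ := by
  ext (x | x) <;> simp

lemma compl_range_inl_union_image_inr (U : Set V₂) :
    (range Sum.inl ∪ Sum.inr '' U : Set (V₁ ⊕ V₂))ᶜ = Sum.inr '' Uᶜ := by
  ext (x | x) <;> simp

lemma ncard_range_inr_union_image_inl [Finite V₁] [Finite V₂] (A : Set V₁) :
    (range Sum.inr ∪ Sum.inl '' A : Set (V₁ ⊕ V₂)).ncard = A.ncard + Nat.card V₂ := by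
  have := ncard_add_ncard_compl (range Sum.inr ∪ Sum.inl '' A : Set (V₁ ⊕ V₂))
  rw [compl_range_inr_union_image_inl, ncard_image_of_injective _ Sum.inl_injective,
    Nat.card_sum, ← ncard_add_ncard_compl A] at this
  omega

lemma ncard_range_inl_union_image_inr [Finite V₁] [Finite V₂] (U : Set V₂) :
    (range Sum.inl ∪ Sum.inr '' U : Set (V₁ ⊕ V₂)).ncard = U.ncard + Nat.card V₁ := by
  have := ncard_add_ncard_compl (range Sum.inl ∪ Sum.inr '' U : Set (V₁ ⊕ V₂))
  rw [compl_range_inl_union_image_inr, ncard_image_of_injective _ Sum.inr_injective,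
    Nat.card_sum, ← ncard_add_ncard_compl U] at this
  omega

lemma cutPointProperty_joinGraph_range_inr_union_iff [Nonempty V₂] {A : Set V₁} :
    CutPointProperty (joinGraph G₁ G₂) (range Sum.inr ∪ Sum.inl '' A) ↔
      CutPointProperty G₁ A ∧ 1 < nc G₁ Aᶜ := by
  have h_inl (a : V₁) :
      nc (joinGraph G₁ G₂) (Sum.inl '' Aᶜ ∪ {Sum.inl a}) = nc G₁ (Aᶜ ∪ {a}) := by
    rw [← image_singleton, ← image_union, nc_joinGraph_image_inl]
  have h_inr (b : V₂) : nc (joinGraph G₁ G₂) (Sum.inl '' Aᶜ ∪ {Sum.inr b}) = 1 := by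
    rcases Aᶜ.eq_empty_or_nonempty with h | ⟨a, ha⟩
    · rw [h, image_empty, empty_union, nc_singleton]
    · exact nc_joinGraph_eq_one ⟨a, .inl (mem_image_of_mem _ ha)⟩ ⟨b, .inr rfl⟩
  simp only [CutPointProperty, compl_range_inr_union_image_inl, Sum.forall, h_inl, h_inr,
    nc_joinGraph_image_inl]
  simp

lemma cutPointProperty_joinGraph_range_inl_union_iff [Nonempty V₁] {U : Set V₂} :
    CutPointProperty (joinGraph G₁ G₂) (range Sum.inl ∪ Sum.inr '' U) ↔
      CutPointProperty G₂ U ∧ 1 < nc G₂ Uᶜ := by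
  rw [← cutPointProperty_joinGraph_range_inr_union_iff (G₂ := G₁),
    ← cutPointProperty_image_iso (Iso.joinComm G₁ G₂)]
  congr!
  ext (x | x) <;> simp [Iso.joinComm]

lemma CutPointProperty.eq_range_union_of_joinGraph {T : Set (V₁ ⊕ V₂)}
    (hT : CutPointProperty (joinGraph G₁ G₂) T) (hne : T.Nonempty) :
    (∃ A, T = range Sum.inr ∪ Sum.inl '' A) ∨ ∃ U, T = range Sum.inl ∪ Sum.inr '' U := by
  obtain ⟨v, hv⟩ := hne
  by_cases hl : ∃ a, Sum.inl a ∈ Tᶜ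
  · by_cases hr : ∃ b, Sum.inr b ∈ Tᶜ
    · have := hT v hv
      rw [nc_joinGraph_eq_one hl hr, nc_joinGraph_eq_one (hl.imp fun _ => .inl)
        (hr.imp fun _ => .inl)] at this
      exact absurd this (lt_irrefl 1)
    · push Not at hr
      exact .inl ⟨Sum.inl ⁻¹' T, by ext (x | x) <;> simp_all⟩
  · push Not at hl
    exact .inr ⟨Sum.inr ⁻¹' T, by ext (x | x) <;> simp_all⟩

lemma isCutUnmixed_joinGraph_iff [Finite V₁] [Finite V₂] [Nonempty V₁] [Nonempty V₂] :
    IsCutUnmixed (joinGraph G₁ G₂) ↔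
      (∀ A, CutPointProperty G₁ A → 1 < nc G₁ Aᶜ → nc G₁ Aᶜ = A.ncard + Nat.card V₂ + 1) ∧
      (∀ U, CutPointProperty G₂ U → 1 < nc G₂ Uᶜ → nc G₂ Uᶜ = U.ncard + Nat.card V₁ + 1) := by
  refine ⟨fun h => ⟨fun A hA hsep => ?_, fun U hU hsep => ?_⟩, fun ⟨h₁, h₂⟩ T hT => ?_⟩
  · have := h _ (cutPointProperty_joinGraph_range_inr_union_iff.mpr ⟨hA, hsep⟩)
    rwa [compl_range_inr_union_image_inl, nc_joinGraph_image_inl,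
      ncard_range_inr_union_image_inl] at this
  · have := h _ (cutPointProperty_joinGraph_range_inl_union_iff.mpr ⟨hU, hsep⟩)
    rwa [compl_range_inl_union_image_inr, nc_joinGraph_image_inr,
      ncard_range_inl_union_image_inr] at this
  rcases T.eq_empty_or_nonempty with rfl | hne
  · rw [compl_empty, ncard_empty, nc_joinGraph_eq_one ⟨Classical.arbitrary V₁, mem_univ _⟩
      ⟨Classical.arbitrary V₂, mem_univ _⟩]
  rcases hT.eq_range_union_of_joinGraph hne with ⟨A, rfl⟩ | ⟨U, rfl⟩
  · obtain ⟨hA, hsep⟩ := cutPointProperty_joinGraph_range_inr_union_iff.mp hT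
    rw [compl_range_inr_union_image_inl, nc_joinGraph_image_inl,
      ncard_range_inr_union_image_inl, h₁ A hA hsep]
  · obtain ⟨hU, hsep⟩ := cutPointProperty_joinGraph_range_inl_union_iff.mp hT
    rw [compl_range_inl_union_image_inr, nc_joinGraph_image_inr,
      ncard_range_inl_union_image_inr, h₂ U hU hsep]

end Join

section Sigma

variable {ι : Type*} {V : ι → Type*} {G : ∀ i, SimpleGraph (V i)}

def Equiv.setSigmaPreimageMk (s : Set (Σ i, V i)) : s ≃ Σ i, Sigma.mk i ⁻¹' s where
  toFun x := ⟨x.1.1, x.1.2, x.2⟩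
  invFun y := ⟨⟨y.1, y.2.1⟩, y.2.2⟩
  left_inv _ := rfl
  right_inv _ := rfl

def SimpleGraph.Iso.sigmaGraphInduce (G : ∀ i, SimpleGraph (V i)) (s : Set (Σ i, V i)) :
    (sigmaGraph G).induce s ≃g sigmaGraph fun i => (G i).induce (Sigma.mk i ⁻¹' s) where
  toEquiv := Equiv.setSigmaPreimageMk s
  map_rel_iff' := by
    rintro ⟨⟨i, a⟩, ha⟩ ⟨⟨j, b⟩, hb⟩
    show (∃ h : i = j, _) ↔ ∃ h : i = j, _
    constructor <;> rintro ⟨rfl, h⟩ <;> exact ⟨rfl, h⟩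

def SimpleGraph.Hom.sigmaMk (G : ∀ i, SimpleGraph (V i)) (i : ι) : G i →g sigmaGraph G where
  toFun := Sigma.mk i
  map_rel' h := ⟨rfl, h⟩

lemma sigmaGraph_connectedComponentMk_eq_of_adj {v w : Σ i, V i}
    (h : (sigmaGraph G).Adj v w) :
    (⟨v.1, (G v.1).connectedComponentMk v.2⟩ : Σ i, (G i).ConnectedComponent) =
      ⟨w.1, (G w.1).connectedComponentMk w.2⟩ := by
  obtain ⟨i, a⟩ := v
  obtain ⟨j, b⟩ := w
  obtain ⟨hij, h⟩ := h
  dsimp at hij h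
  subst hij
  exact congrArg (Sigma.mk i) (ConnectedComponent.connectedComponentMk_eq_of_adj h)

def sigmaGraphConnectedComponentEquiv (G : ∀ i, SimpleGraph (V i)) :
    (sigmaGraph G).ConnectedComponent ≃ Σ i, (G i).ConnectedComponent where
  toFun := ConnectedComponent.lift (fun v => ⟨v.1, (G v.1).connectedComponentMk v.2⟩)
    fun _ _ p _ => p.apply_eq_apply_of_adj fun _ _ => sigmaGraph_connectedComponentMk_eq_of_adj
  invFun c := c.2.map (Hom.sigmaMk G c.1)
  left_inv := ConnectedComponent.ind fun _ => rfl
  right_inv := by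
    rintro ⟨i, c⟩
    exact ConnectedComponent.ind (fun _ => rfl) c

variable [Fintype ι] [∀ i, Finite (V i)]

lemma nc_sigmaGraph (s : Set (Σ i, V i)) :
    nc (sigmaGraph G) s = ∑ i, nc (G i) (Sigma.mk i ⁻¹' s) := by
  rw [nc, Nat.card_congr ((Iso.sigmaGraphInduce G s).connectedComponentEquiv.trans
    (sigmaGraphConnectedComponentEquiv _)), Nat.card_sigma]
  rfl

lemma ncard_eq_sum_ncard_preimage_sigmaMk (s : Set (Σ i, V i)) :
    s.ncard = ∑ i, (Sigma.mk i ⁻¹' s).ncard := by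
  rw [← Nat.card_coe_set_eq, Nat.card_congr (Equiv.setSigmaPreimageMk s), Nat.card_sigma]
  simp only [Nat.card_coe_set_eq]

lemma cutPointProperty_sigmaGraph_iff {U : Set (Σ i, V i)} :
    CutPointProperty (sigmaGraph G) U ↔ ∀ i, CutPointProperty (G i) (Sigma.mk i ⁻¹' U) := by
  classical
  have hfib_ne {j : ι} (x : V j) {i : ι} (hij : i ≠ j) :
      Sigma.mk i ⁻¹' (Uᶜ ∪ {⟨j, x⟩}) = Sigma.mk i ⁻¹' Uᶜ := by
    ext
    simp [hij]
  have hfib_self {j : ι} (x : V j) :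
      Sigma.mk j ⁻¹' (Uᶜ ∪ {⟨j, x⟩}) = (Sigma.mk j ⁻¹' U)ᶜ ∪ {x} := by
    ext
    simp
  simp only [CutPointProperty, Sigma.forall, mem_preimage, nc_sigmaGraph]
  refine forall_congr' fun j => forall₂_congr fun x _ => ?_
  rw [Fintype.sum_lt_sum_iff_of_eq_of_ne j fun i hij => by rw [hfib_ne x hij], hfib_self,
    preimage_compl]

lemma CutPointProperty.card_le_nc_sigmaGraph_compl [∀ i, Nonempty (V i)]
    {U : Set (Σ i, V i)} (hU : CutPointProperty (sigmaGraph G) U) :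
    Nat.card ι ≤ nc (sigmaGraph G) Uᶜ := by
  have hfib := cutPointProperty_sigmaGraph_iff.mp hU
  rw [nc_sigmaGraph, Nat.card_eq_fintype_card, Fintype.card_eq_sum_ones]
  exact Finset.sum_le_sum fun i _ => nc_pos (hfib i).compl_nonempty

lemma CutPointProperty.image_sigmaMk {j : ι} {T : Set (V j)} (hT : CutPointProperty (G j) T) :
    CutPointProperty (sigmaGraph G) (Sigma.mk j '' T) :=
  cutPointProperty_sigmaGraph_iff.mpr fun i => by
    rcases eq_or_ne i j with rfl | hij
    · rwa [sigma_mk_preimage_image_eq_self]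
    · rw [sigma_mk_preimage_image' hij.symm]
      exact cutPointProperty_empty _

lemma nc_sigmaGraph_compl_image_sigmaMk (hG : ∀ i, (G i).Connected) (j : ι) (T : Set (V j)) :
    nc (sigmaGraph G) (Sigma.mk j '' T)ᶜ + 1 = nc (G j) Tᶜ + Nat.card ι := by
  classical
  have hone (i) (hi : i ∈ ({j}ᶜ : Finset ι)) :
      nc (G i) (Sigma.mk i ⁻¹' (Sigma.mk j '' T)ᶜ) = 1 := by
    rw [preimage_compl, sigma_mk_preimage_image' (by simpa [eq_comm] using hi), compl_empty,
      nc_univ_of_connected (hG i)]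
  rw [nc_sigmaGraph, Fintype.sum_eq_add_sum_compl j, Finset.sum_congr rfl hone, preimage_compl,
    sigma_mk_preimage_image_eq_self, Finset.sum_const, smul_eq_mul, mul_one, Finset.card_compl,
    Finset.card_singleton, Nat.card_eq_fintype_card]
  have := Fintype.card_pos_iff.mpr ⟨j⟩
  omega

lemma forall_nc_sigmaGraph_compl_eq_iff (hG : ∀ i, (G i).Connected) (hι : 2 ≤ Nat.card ι)
    (n : ℕ) :
    (∀ U, CutPointProperty (sigmaGraph G) U → 1 < nc (sigmaGraph G) Uᶜ →
        nc (sigmaGraph G) Uᶜ = U.ncard + n + 1) ↔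
      Nat.card ι = n + 1 ∧ ∀ i, IsCutUnmixed (G i) := by
  have := fun i => (hG i).nonempty
  have hsep (U) (hU : CutPointProperty (sigmaGraph G) U) : 1 < nc (sigmaGraph G) Uᶜ :=
    one_lt_two.trans_le (hι.trans hU.card_le_nc_sigmaGraph_compl)
  constructor
  · intro h
    have hcard : Nat.card ι = n + 1 := by
      simpa [nc_sigmaGraph, nc_univ_of_connected (hG _)] using
        h ∅ (cutPointProperty_empty _) (hsep _ (cutPointProperty_empty _))
    refine ⟨hcard, fun j T hT => ?_⟩
    have hcount := h _ hT.image_sigmaMk (hsep _ hT.image_sigmaMk)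
    rw [ncard_image_of_injective _ sigma_mk_injective] at hcount
    have := nc_sigmaGraph_compl_image_sigmaMk hG j T
    omega
  · rintro ⟨hcard, hG'⟩ U hU -
    have hfib := cutPointProperty_sigmaGraph_iff.mp hU
    rw [nc_sigmaGraph, ncard_eq_sum_ncard_preimage_sigmaMk U, add_assoc, ← hcard,
      Nat.card_eq_fintype_card, Fintype.card_eq_sum_ones, ← Finset.sum_add_distrib]
    exact Finset.sum_congr rfl fun i _ => hG' i _ (hfib i)

end Sigma

/-- the join of a connected graph `H` on `t` vertices with a disjoint union
of `r ≥ 2` connected graphs is unmixed (Rauf–Rinaldo sense) iff `H` is complete,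
`r = t + 1`, and each summand is unmixed. -/
theorem stmt13 {V₀ : Type*} [Fintype V₀] {r : ℕ} (hr : 2 ≤ r)
    {V : Fin r → Type*} [∀ i, Fintype (V i)]
    (H : SimpleGraph V₀) (Hi : ∀ i, SimpleGraph (V i))
    (hH : H.Connected) (hHi : ∀ i, (Hi i).Connected) :
    (∀ T : Set (V₀ ⊕ Σ i, V i),
        CutPointProperty (joinGraph H (sigmaGraph Hi)) T →
        nc (joinGraph H (sigmaGraph Hi)) Tᶜ = T.ncard + 1) ↔
      (H = ⊤ ∧ r = Fintype.card V₀ + 1 ∧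
        ∀ i, ∀ Ti : Set (V i), CutPointProperty (Hi i) Ti →
          nc (Hi i) Tiᶜ = Ti.ncard + 1) := by
  have := hH.nonempty
  have := fun i => (hHi i).nonempty
  have : Nonempty (Σ i, V i) := ⟨⟨⟨0, by omega⟩, Classical.arbitrary _⟩⟩
  change IsCutUnmixed (joinGraph H (sigmaGraph Hi)) ↔
    H = ⊤ ∧ r = Fintype.card V₀ + 1 ∧ ∀ i, IsCutUnmixed (Hi i)
  rw [isCutUnmixed_joinGraph_iff,
    forall_nc_sigmaGraph_compl_eq_iff hHi (by rwa [Nat.card_fin]), Nat.card_fin,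
    Nat.card_eq_fintype_card (α := V₀)]
  refine and_congr_left fun ⟨hrt, _⟩ => forall_nc_compl_eq_iff_eq_top ?_
  calc Nat.card V₀ ≤ r := by rw [hrt, Nat.card_eq_fintype_card]; omega
    _ = Nat.card (Fin r) := (Nat.card_fin r).symm
    _ ≤ Nat.card (Σ i, V i) := Nat.card_le_card_of_surjective Sigma.fst
      fun i => ⟨⟨i, Classical.arbitrary _⟩, rfl⟩
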